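/- For each n ≥ 1 there exists a constant C_n > 0 such that |y(v) + y(-v) - ∑_{k=0}^n 2a_{2k} v^{2k}| ≤ C_n v^{2n} for all v ∈ ℝ, where a_k are the Maclaurin coefficients of y. -/

import Mathlib

/-!
Writing `x - log (1 + x) = x² q(x)` with `q` analytic and `q 0 = 1/2`, the function
`g x = sign x * √(x - log (1 + x))` equals `x * √(q x)`. So `g` is analytic at `0` with
`g' 0 = √2 / 2`, and it is strictly increasing on `(-1, ∞)`; the analytic inverse function
theorem then makes its inverse `f` analytic at `0`, and `y = √q ∘ f` is analytic at `0` too.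
Near `0`, Taylor's theorem with an analytic remainder bounds `y v + y (-v)` minus its even Taylor
polynomial by `O(v^(2n+1))`. Away from `0`, `|f|` stays bounded below because `g` is continuous
at `0`, so `y` grows at most linearly there, and since `1 ≤ 2n` every term is `O(v^(2n))`.
-/

open Real Set Finset Filter Topology Asymptotics Function

theorem AnalyticAt.exists_eq_sq_mul {𝕜 : Type*} [NontriviallyNormedField 𝕜] [CharZero 𝕜]
    {E : Type*} [NormedAddCommGroup E] [NormedSpace 𝕜 E] [CompleteSpace E] {f : 𝕜 → E}
    (hf : AnalyticAt 𝕜 f 0) (h0 : f 0 = 0) (h1 : deriv f 0 = 0) :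
    ∃ F : 𝕜 → E, AnalyticAt 𝕜 F 0 ∧ F 0 = (2 : 𝕜)⁻¹ • iteratedDeriv 2 f 0 ∧
      ∀ z, f z = z ^ 2 • F z := by
  obtain ⟨F, hF, hfF⟩ := hf.exists_eq_sum_add_pow_mul 3
  refine ⟨fun z => (2 : 𝕜)⁻¹ • iteratedDeriv 2 f 0 + z • F z, by fun_prop, by simp,
    fun z => ?_⟩
  rw [hfF z]
  simp only [sum_range_succ, range_one, sum_singleton, pow_zero, pow_one, Nat.factorial,
    Nat.succ_eq_add_one, zero_add, mul_one, Nat.cast_one, Nat.cast_ofNat, div_one,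
    div_self one_ne_zero, iteratedDeriv_zero, iteratedDeriv_one, h0, h1, smul_zero, add_zero,
    Nat.reduceAdd, smul_add, smul_smul]
  module

theorem AnalyticAt.analyticAt_of_leftInverse_of_injOn {𝕜 : Type*} [NontriviallyNormedField 𝕜]
    [CompleteSpace 𝕜] {f g : 𝕜 → 𝕜} {a : 𝕜} {s : Set 𝕜} (hg : AnalyticAt 𝕜 g a)
    (hg' : deriv g a ≠ 0) (hs : s ∈ 𝓝 a) (hinj : InjOn g s)
    (hfs : ∀ᶠ u in 𝓝 (g a), f u ∈ s) (hgf : ∀ᶠ u in 𝓝 (g a), g (f u) = u) :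
    AnalyticAt 𝕜 f (g a) := by
  have hd := hg.hasStrictDerivAt.hasStrictFDerivAt_equiv hg'
  let e := hd.toOpenPartialHomeomorph g
  have ha : a ∈ e.source := hd.mem_toOpenPartialHomeomorph_source
  have hga : g a ∈ e.target := hd.image_mem_toOpenPartialHomeomorph_target
  refine (e.analyticAt_symm' ha hg hd.hasFDerivAt.fderiv).congr ?_
  have hsymm : ∀ᶠ u in 𝓝 (g a), e.symm u ∈ s := by
    refine e.continuousAt_symm hga ?_
    rwa [show e.symm (g a) = a from e.left_inv ha]
  filter_upwards [hfs, hgf, hsymm, e.open_target.mem_nhds hga] with u hfu hgfu hu ht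
  exact hinj hu hfu ((e.right_inv ht).trans hgfu.symm)

theorem sum_range_mul_pow_add_neg_pow {R : Type*} [CommRing R] (c : ℕ → R) (v : R) (n : ℕ) :
    ∑ i ∈ range (2 * n + 1), c i * (v ^ i + (-v) ^ i) =
      ∑ k ∈ range (n + 1), 2 * c (2 * k) * v ^ (2 * k) := by
  induction n with
  | zero =>
    simp only [mul_zero, zero_add, range_one, sum_singleton, pow_zero, mul_one]
    ring
  | succ n ih =>
    rw [show 2 * (n + 1) + 1 = 2 * n + 1 + 1 + 1 by ring, sum_range_succ, sum_range_succ, ih,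
      sum_range_succ _ (n + 1), show 2 * n + 1 + 1 = 2 * (n + 1) by ring, Odd.neg_pow ⟨n, rfl⟩,
      (even_two_mul (n + 1)).neg_pow]
    ring

theorem AnalyticAt.isBigO_add_comp_neg_sub_sum_even {y : ℝ → ℝ} (hy : AnalyticAt ℝ y 0)
    (n : ℕ) :
    (fun v => y v + y (-v) - ∑ k ∈ range (n + 1),
      2 * (iteratedDeriv (2 * k) y 0 / ((2 * k).factorial : ℝ)) * v ^ (2 * k))
      =O[𝓝 0] fun v => v ^ (2 * n) := by
  obtain ⟨F, hF, hyF⟩ := hy.exists_eq_sum_add_pow_mul (2 * n + 1)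
  have htaylor (w : ℝ) :
      ∑ i ∈ range (2 * n + 1), (w ^ i / i.factorial) • iteratedDeriv i y 0 =
      ∑ i ∈ range (2 * n + 1), iteratedDeriv i y 0 / i.factorial * w ^ i :=
    sum_congr rfl fun i _ => by rw [smul_eq_mul]; ring
  have hrem (v : ℝ) : y v + y (-v) - ∑ k ∈ range (n + 1),
      2 * (iteratedDeriv (2 * k) y 0 / ((2 * k).factorial : ℝ)) * v ^ (2 * k) =
        v ^ (2 * n) * (v * (F v - F (-v))) := by
    rw [← sum_range_mul_pow_add_neg_pow (fun i => iteratedDeriv i y 0 / i.factorial), hyF v,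
      hyF (-v), htaylor, htaylor, Odd.neg_pow ⟨n, rfl⟩]
    simp only [smul_eq_mul, mul_add, sum_add_distrib]
    ring
  simp_rw [hrem]
  have hbdd : (fun v : ℝ => v * (F v - F (-v))) =O[𝓝 0] fun _ => (1 : ℝ) :=
    (continuousAt_id.mul (hF.continuousAt.sub
      (hF.continuousAt.comp_of_eq continuous_neg.continuousAt neg_zero))).tendsto.isBigO_one ℝ
  simpa using (isBigO_refl (fun v : ℝ => v ^ (2 * n)) _).mul hbdd

theorem isBigO_pow_pow_of_le_abs {ε : ℝ} (hε : 0 < ε) {j m : ℕ} (hjm : j ≤ m) :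
    (fun v : ℝ => v ^ j) =O[𝓟 {v | ε ≤ |v|}] fun v => v ^ m := by
  refine isBigO_principal.2 ⟨(ε ^ (m - j))⁻¹, fun v hv => ?_⟩
  rw [Real.norm_eq_abs, Real.norm_eq_abs, abs_pow, abs_pow, inv_mul_eq_div,
    le_div_iff₀ (by positivity), ← Nat.sub_add_cancel hjm, pow_add, Nat.add_sub_cancel,
    mul_comm]
  exact mul_le_mul_of_nonneg_right (pow_le_pow_left₀ hε.le hv _) (by positivity)

theorem exists_pos_le_dist_of_leftInverse {α β : Type*} [PseudoMetricSpace α]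
    [PseudoMetricSpace β] {f : β → α} {g : α → β} {a : α} (hg : ContinuousAt g a)
    (hgf : LeftInverse g f) {ε : ℝ} (hε : 0 < ε) :
    ∃ δ > 0, ∀ v, ε ≤ dist v (g a) → δ ≤ dist (f v) a := by
  obtain ⟨δ, hδ, hgδ⟩ := Metric.continuousAt_iff.1 hg ε hε
  refine ⟨δ, hδ, fun v hv => not_lt.1 fun hfv => hv.not_gt ?_⟩
  simpa only [hgf v] using hgδ hfv

theorem isBigO_of_eq_div_of_leftInverse {f g y : ℝ → ℝ} (hg : ContinuousAt g 0)
    (hg0 : g 0 = 0) (hgf : LeftInverse g f) (hy : ∀ v ≠ 0, y v = v / f v) {ε : ℝ}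
    (hε : 0 < ε) :
    y =O[𝓟 {v | ε ≤ |v|}] fun v => v := by
  obtain ⟨δ, hδ, hfδ⟩ := exists_pos_le_dist_of_leftInverse hg hgf hε
  simp only [hg0, Real.dist_0_eq_abs] at hfδ
  refine isBigO_principal.2 ⟨δ⁻¹, fun v hv => ?_⟩
  have hv0 : v ≠ 0 := by rintro rfl; exact hε.not_ge (by simpa using hv)
  rw [Real.norm_eq_abs, Real.norm_eq_abs, hy v hv0, abs_div, inv_mul_eq_div]
  exact div_le_div_of_nonneg_left (abs_nonneg v) hδ (hfδ v hv)

theorem isBigO_add_comp_neg_sub_sum_of_le_abs {y : ℝ → ℝ} {ε : ℝ} (hε : 0 < ε)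
    (hy : y =O[𝓟 {v | ε ≤ |v|}] fun v => v) (c : ℕ → ℝ) {n : ℕ} (hn : 1 ≤ n) :
    (fun v => y v + y (-v) - ∑ k ∈ range (n + 1), c k * v ^ (2 * k)) =O[𝓟 {v | ε ≤ |v|}]
      fun v => v ^ (2 * n) := by
  have hid : (fun v : ℝ => v) =O[𝓟 {v | ε ≤ |v|}] fun v => v ^ (2 * n) := by
    simpa using isBigO_pow_pow_of_le_abs hε (show 1 ≤ 2 * n by omega)
  have hneg : (fun v => y (-v)) =O[𝓟 {v | ε ≤ |v|}] fun v => v :=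
    (hy.comp_tendsto (tendsto_principal_principal.2 fun v hv => by simpa using hv)).trans
      (isBigO_refl _ _).neg_left
  refine ((hy.trans hid).add (hneg.trans hid)).sub (IsBigO.fun_sum fun k hk => ?_)
  exact (isBigO_pow_pow_of_le_abs hε (by have := mem_range.1 hk; omega)).const_mul_left (c k)

theorem isBigO_top_of_isBigO_nhds_zero {E F G : Type*} [SeminormedAddCommGroup E] [Norm F]
    [SeminormedAddCommGroup G] {f : E → F} {g : E → G} (h0 : f =O[𝓝 0] g)
    (hfar : ∀ ε > 0, f =O[𝓟 {v | ε ≤ ‖v‖}] g) : f =O[⊤] g := by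
  obtain ⟨c, hc⟩ := h0.bound
  obtain ⟨ε, hε, hball⟩ := Metric.eventually_nhds_iff.1 hc
  have hnear : f =O[𝓟 (Metric.ball 0 ε)] g := IsBigO.of_bound c (eventually_principal.2 hball)
  have hcover : Metric.ball (0 : E) ε ∪ {v | ε ≤ ‖v‖} = univ := by
    ext v; simp [lt_or_ge]
  simpa [sup_principal, hcover] using hnear.sup (hfar ε hε)

theorem comp_eq_div_of_eq_mul {f g h : ℝ → ℝ} (hgh : ∀ x, g x = x * h x)
    (hgf : LeftInverse g f) {v : ℝ} (hv : v ≠ 0) : h (f v) = v / f v := by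
  have hfv : f v ≠ 0 := fun hfv => hv (by rw [← hgf v, hfv, hgh, zero_mul])
  rw [eq_div_iff hfv]
  conv_rhs => rw [← hgf v, hgh]
  ring

lemma Real.sign_mul_abs (x : ℝ) : Real.sign x * |x| = x := by
  rcases lt_trichotomy x 0 with hx | rfl | hx
  · rw [Real.sign_of_neg hx, abs_of_neg hx]; ring
  · simp
  · rw [Real.sign_of_pos hx, abs_of_pos hx]; ring

noncomputable def logGap (x : ℝ) : ℝ := x - Real.log (1 + x)

lemma hasDerivAt_logGap {x : ℝ} (hx : -1 < x) : HasDerivAt logGap (x / (1 + x)) x := by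
  have hx' : 1 + x ≠ 0 := by linarith
  rw [show x / (1 + x) = 1 - 1 / (1 + x) by field_simp; ring]
  exact (hasDerivAt_id' x).fun_sub (((hasDerivAt_id' x).const_add 1).log hx')

lemma analyticAt_logGap : AnalyticAt ℝ logGap 0 :=
  analyticAt_id.sub ((analyticAt_const.add analyticAt_id).log (by norm_num))

lemma deriv_logGap_zero : deriv logGap 0 = 0 := by
  simpa using (hasDerivAt_logGap (x := 0) (by norm_num)).deriv

lemma iteratedDeriv_two_logGap : iteratedDeriv 2 logGap 0 = 1 := by
  have hd : deriv logGap =ᶠ[𝓝 0] fun x => x / (1 + x) := by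
    filter_upwards [eventually_gt_nhds (show (-1 : ℝ) < 0 by norm_num)] with x hx
    exact (hasDerivAt_logGap hx).deriv
  rw [iteratedDeriv_succ, iteratedDeriv_one, hd.deriv_eq]
  simpa using ((hasDerivAt_id' (0 : ℝ)).fun_div ((hasDerivAt_id' (0 : ℝ)).const_add 1)
    (by norm_num)).deriv

lemma logGap_nonneg {x : ℝ} (hx : -1 < x) : 0 ≤ logGap x := by
  have := Real.log_le_sub_one_of_pos (show 0 < 1 + x by linarith)
  rw [logGap]
  linarith

lemma strictMonoOn_logGap : StrictMonoOn logGap (Ici 0) := by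
  refine strictMonoOn_of_deriv_pos (convex_Ici 0)
    (fun x hx =>
      (hasDerivAt_logGap (by linarith [Set.mem_Ici.1 hx])).continuousAt.continuousWithinAt)
    fun x hx => ?_
  rw [interior_Ici, Set.mem_Ioi] at hx
  rw [(hasDerivAt_logGap (by linarith)).deriv]
  positivity

lemma strictAntiOn_logGap : StrictAntiOn logGap (Ioc (-1) 0) := by
  refine strictAntiOn_of_deriv_neg (convex_Ioc (-1) 0)
    (fun x hx => (hasDerivAt_logGap hx.1).continuousAt.continuousWithinAt) fun x hx => ?_
  rw [interior_Ioc] at hx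
  rw [(hasDerivAt_logGap hx.1).deriv]
  exact div_neg_of_neg_of_pos hx.2 (by linarith [hx.1])

noncomputable def signedSqrtLogGap (x : ℝ) : ℝ := Real.sign x * √(logGap x)

lemma signedSqrtLogGap_zero : signedSqrtLogGap 0 = 0 := by simp [signedSqrtLogGap]

lemma signedSqrtLogGap_of_nonneg {x : ℝ} (hx : 0 ≤ x) :
    signedSqrtLogGap x = √(logGap x) := by
  rcases hx.lt_or_eq with hx | rfl
  · rw [signedSqrtLogGap, Real.sign_of_pos hx, one_mul]
  · simp [signedSqrtLogGap, logGap]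

lemma signedSqrtLogGap_of_nonpos {x : ℝ} (hx : x ≤ 0) :
    signedSqrtLogGap x = -√(logGap x) := by
  rcases hx.lt_or_eq with hx | rfl
  · rw [signedSqrtLogGap, Real.sign_of_neg hx, neg_one_mul]
  · simp [signedSqrtLogGap, logGap]

lemma strictMonoOn_signedSqrtLogGap : StrictMonoOn signedSqrtLogGap (Ioi (-1)) := by
  have hneg : StrictMonoOn signedSqrtLogGap (Ioc (-1) 0) := by
    intro x hx x' hx' hxx'
    rw [signedSqrtLogGap_of_nonpos hx.2, signedSqrtLogGap_of_nonpos hx'.2, neg_lt_neg_iff]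
    exact Real.sqrt_lt_sqrt (logGap_nonneg hx'.1) (strictAntiOn_logGap hx hx' hxx')
  have hpos : StrictMonoOn signedSqrtLogGap (Ici 0) := by
    intro x hx x' hx' hxx'
    rw [signedSqrtLogGap_of_nonneg hx, signedSqrtLogGap_of_nonneg hx']
    exact Real.sqrt_lt_sqrt (logGap_nonneg (by linarith [Set.mem_Ici.1 hx]))
      (strictMonoOn_logGap hx hx' hxx')
  rw [← Ioc_union_Ici_eq_Ioi (show (-1 : ℝ) < 0 by norm_num)]
  exact hneg.union hpos (isGreatest_Ioc (show (-1 : ℝ) < 0 by norm_num)) isLeast_Ici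

lemma exists_signedSqrtLogGap_eq_mul :
    ∃ h : ℝ → ℝ, AnalyticAt ℝ h 0 ∧ h 0 = √2 / 2 ∧
      ∀ x, signedSqrtLogGap x = x * h x := by
  obtain ⟨q, hq, hq0, hgap⟩ :=
    analyticAt_logGap.exists_eq_sq_mul (by simp [logGap]) deriv_logGap_zero
  rw [iteratedDeriv_two_logGap, smul_eq_mul, mul_one] at hq0
  refine ⟨fun x => √(q x), (hq.contDiffAt.sqrt (by norm_num [hq0])).analyticAt, ?_,
    fun x => ?_⟩
  · simp only [hq0, Real.sqrt_inv]
    field_simp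
    exact (Real.sq_sqrt zero_le_two).symm
  · rw [signedSqrtLogGap, hgap, smul_eq_mul, Real.sqrt_mul (sq_nonneg x), Real.sqrt_sq_eq_abs,
      ← mul_assoc, Real.sign_mul_abs]

lemma analyticAt_signedSqrtLogGap : AnalyticAt ℝ signedSqrtLogGap 0 := by
  obtain ⟨h, hh, -, hgh⟩ := exists_signedSqrtLogGap_eq_mul
  rw [funext hgh]
  exact analyticAt_id.mul hh

lemma deriv_signedSqrtLogGap_zero : deriv signedSqrtLogGap 0 = √2 / 2 := by
  obtain ⟨h, hh, hh0, hgh⟩ := exists_signedSqrtLogGap_eq_mul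
  rw [funext hgh, ← hh0]
  simpa using ((hasDerivAt_id' 0).fun_mul hh.differentiableAt.hasDerivAt).deriv

theorem analyticAt_zero_of_leftInverse_signedSqrtLogGap {f : ℝ → ℝ}
    (hf : ∀ u, f u ∈ Set.Ioi (-1) ∧ signedSqrtLogGap (f u) = u) :
    f 0 = 0 ∧ AnalyticAt ℝ f 0 := by
  have hinj := strictMonoOn_signedSqrtLogGap.injOn
  refine ⟨hinj (hf 0).1 (show (0 : ℝ) ∈ Set.Ioi (-1) by norm_num)
    (by rw [(hf 0).2, signedSqrtLogGap_zero]), ?_⟩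
  simpa [signedSqrtLogGap_zero] using analyticAt_signedSqrtLogGap.analyticAt_of_leftInverse_of_injOn
    (by rw [deriv_signedSqrtLogGap_zero]; positivity) (Ioi_mem_nhds (by norm_num)) hinj
    (.of_forall fun u => (hf u).1) (.of_forall fun u => (hf u).2)

theorem stmt_16 (f : ℝ → ℝ)
    (hf : ∀ u : ℝ, f u ∈ Set.Ioi (-1 : ℝ) ∧
      Real.sign (f u) * Real.sqrt (f u - Real.log (1 + f u)) = u)
    (y : ℝ → ℝ)
    (hy : ∀ v : ℝ, y v = if v = 0 then Real.sqrt 2 / 2 else v / f v)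
    (a : ℕ → ℝ)
    (ha : ∀ k : ℕ, a k = iteratedDeriv k y 0 / (Nat.factorial k)) :
    ∀ n : ℕ, 1 ≤ n → ∃ C : ℝ, 0 < C ∧ ∀ v : ℝ,
      |y v + y (-v) - ∑ k ∈ Finset.range (n + 1), 2 * a (2 * k) * v ^ (2 * k)| ≤
        C * v ^ (2 * n) := by
  intro n hn
  obtain rfl : a = fun k => iteratedDeriv k y 0 / k.factorial := funext ha
  have hgf : LeftInverse signedSqrtLogGap f := fun u => (hf u).2
  obtain ⟨h, hh, hh0, hgh⟩ := exists_signedSqrtLogGap_eq_mul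
  obtain ⟨hf0, hf_an⟩ := analyticAt_zero_of_leftInverse_signedSqrtLogGap hf
  have hyf : y = h ∘ f := funext fun v => by
    rw [hy]
    split_ifs with hv
    · rw [hv, comp_apply, hf0, hh0]
    · exact (comp_eq_div_of_eq_mul hgh hgf hv).symm
  have hnear := (hyf ▸ hh.comp_of_eq hf_an hf0).isBigO_add_comp_neg_sub_sum_even n
  have hfar (ε : ℝ) (hε : 0 < ε) := isBigO_of_eq_div_of_leftInverse
    analyticAt_signedSqrtLogGap.continuousAt signedSqrtLogGap_zero hgf
    (fun v hv => (hy v).trans (if_neg hv)) hε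
  obtain ⟨C, hC, hbound⟩ := (isBigO_top_of_isBigO_nhds_zero hnear
    fun ε hε => isBigO_add_comp_neg_sub_sum_of_le_abs hε (hfar ε hε) _ hn).exists_pos
  refine ⟨C, hC, fun v => ?_⟩
  simpa only [Real.norm_eq_abs, abs_of_nonneg ((even_two_mul n).pow_nonneg v)] using
    isBigOWith_top.1 hbound v
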